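/- Let ρ be a rank function on a skeletally small triangulated category C. Then the kernel on objects Ker ρ_ob = {X in C : ρ(1_X) = 0} is a thick subcategory of C. -/

import Mathlib

/-!
Statement 11: For a rank function `ρ` on a skeletally small triangulated category `C`, the
kernel on objects `Ker ρ_ob = {X : ρ(1_X) = 0}` is a thick subcategory of `C`.
-/

open CategoryTheory CategoryTheory.Limits CategoryTheory.Pretriangulated

universe v u

variable (C : Type u) [Category.{v} C] [Preadditive C] [HasZeroObject C] [HasShift C ℤ]
  [∀ n : ℤ, (shiftFunctor C n).Additive] [Pretriangulated C] [HasBinaryBiproducts C]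
  [EssentiallySmall.{v} C]

/-- A rank function on a triangulated category. -/
structure RankFunction where
  rank : ∀ ⦃X Y : C⦄, (X ⟶ Y) → ℝ
  nonneg : ∀ ⦃X Y : C⦄ (f : X ⟶ Y), 0 ≤ rank f
  additive : ∀ ⦃X₁ Y₁ X₂ Y₂ : C⦄ (f : X₁ ⟶ Y₁) (g : X₂ ⟶ Y₂),
    rank (biprod.map f g) = rank f + rank g
  rankNullity : ∀ (T : Triangle C), (T ∈ distTriang C) →
    rank T.mor₁ + rank T.mor₂ = rank (𝟙 T.obj₂)
  shiftInv : ∀ ⦃X Y : C⦄ (f : X ⟶ Y),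
    rank ((shiftFunctor C (1 : ℤ)).map f) = rank f

/-- A thick subcategory of `C`, encoded as a set of objects. -/
structure IsThickSet (P : Set C) : Prop where
  zero : ∀ Z : C, IsZero Z → Z ∈ P
  iso : ∀ ⦃A B : C⦄, (A ≅ B) → A ∈ P → B ∈ P
  shift : ∀ (A : C) (n : ℤ), A ∈ P → (shiftFunctor C n).obj A ∈ P
  ext₂ : ∀ (T : Triangle C), (T ∈ distTriang C) → T.obj₁ ∈ P → T.obj₃ ∈ P → T.obj₂ ∈ P
  summand : ∀ A B : C, (A ⊞ B) ∈ P → A ∈ P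

variable {C}

/-!
Rank-nullity for a distinguished triangle `X ⟶ Y ⟶ Z ⟶ X⟦1⟧` and for its inverse rotation bounds
`ρ f` by both `ρ (𝟙 X)` and `ρ (𝟙 Y)`. Hence `ρ (𝟙 Y) ≤ ρ (𝟙 X) + ρ (𝟙 Z)`, and completing an
isomorphism to a triangle with zero third vertex shows that `ρ (𝟙 X)` is invariant under
isomorphism, hence under all shifts. With `ρ (𝟙 (A ⊞ B)) = ρ (𝟙 A) + ρ (𝟙 B)` and nonnegativity of
`ρ`, these give the closure properties of the kernel.
-/

namespace RankFunction

open ZeroObject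

omit [EssentiallySmall.{v} C]

variable (ρ : RankFunction C)

lemma rank_add_rank_eq_rank_id {X Y Z : C} {f : X ⟶ Y} {g : Y ⟶ Z} {h : Z ⟶ X⟦(1 : ℤ)⟧}
    (hT : Triangle.mk f g h ∈ distTriang C) : ρ.rank f + ρ.rank g = ρ.rank (𝟙 Y) :=
  ρ.rankNullity _ hT

lemma rank_eq_zero_of_isZero_target {X Z : C} (hZ : IsZero Z) (f : X ⟶ Z) : ρ.rank f = 0 := by
  have hT : Triangle.mk (𝟙 X) f 0 ∈ distTriang C :=
    (Triangle.distinguished_iff_of_isZero₃ _ hZ).2 (inferInstanceAs (IsIso (𝟙 X)))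
  linarith [ρ.rank_add_rank_eq_rank_id hT]

lemma rank_hom_eq_rank_id {X Y : C} (e : X ≅ Y) : ρ.rank e.hom = ρ.rank (𝟙 Y) := by
  have hT : Triangle.mk e.hom (0 : Y ⟶ 0) 0 ∈ distTriang C :=
    (Triangle.distinguished_iff_of_isZero₃ _ (isZero_zero C)).2 (inferInstanceAs (IsIso e.hom))
  have h := ρ.rank_add_rank_eq_rank_id hT
  rwa [ρ.rank_eq_zero_of_isZero_target (isZero_zero C), add_zero] at h

lemma rank_le_rank_id_source {X Y : C} (f : X ⟶ Y) : ρ.rank f ≤ ρ.rank (𝟙 X) := by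
  obtain ⟨Z, g, h, hT⟩ := distinguished_cocone_triangle f
  have h_inv : ρ.rank (Triangle.mk f g h).invRotate.mor₁ + ρ.rank f = ρ.rank (𝟙 X) :=
    ρ.rankNullity _ (inv_rot_of_distTriang _ hT)
  linarith [ρ.nonneg (Triangle.mk f g h).invRotate.mor₁]

lemma rank_le_rank_id_target {X Y : C} (f : X ⟶ Y) : ρ.rank f ≤ ρ.rank (𝟙 Y) := by
  obtain ⟨Z, g, h, hT⟩ := distinguished_cocone_triangle f
  linarith [ρ.rank_add_rank_eq_rank_id hT, ρ.nonneg g]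

lemma rank_id_eq_of_iso {X Y : C} (e : X ≅ Y) : ρ.rank (𝟙 X) = ρ.rank (𝟙 Y) :=
  le_antisymm
    ((ρ.rank_hom_eq_rank_id e.symm).symm.trans_le (ρ.rank_le_rank_id_source e.inv))
    ((ρ.rank_hom_eq_rank_id e).symm.trans_le (ρ.rank_le_rank_id_source e.hom)).ge

lemma rank_id_shift_one (A : C) : ρ.rank (𝟙 (A⟦(1 : ℤ)⟧)) = ρ.rank (𝟙 A) := by
  simpa using ρ.shiftInv (𝟙 A)

lemma rank_id_shift (n : ℤ) (A : C) : ρ.rank (𝟙 (A⟦n⟧)) = ρ.rank (𝟙 A) := by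
  induction n using Int.induction_on with
  | zero => exact ρ.rank_id_eq_of_iso ((shiftFunctorZero C ℤ).app A)
  | succ n ih =>
    rw [ρ.rank_id_eq_of_iso ((shiftFunctorAdd C (n : ℤ) 1).app A)]
    dsimp only [Functor.comp_obj]
    rw [rank_id_shift_one, ih]
  | pred n ih =>
    rw [← ih, ρ.rank_id_eq_of_iso ((shiftFunctorAdd' C (-(n : ℤ) - 1) 1 (-n) (by ring)).app A)]
    dsimp only [Functor.comp_obj]
    rw [rank_id_shift_one]

lemma rank_id_obj₂_le {T : Triangle C} (hT : T ∈ distTriang C) :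
    ρ.rank (𝟙 T.obj₂) ≤ ρ.rank (𝟙 T.obj₁) + ρ.rank (𝟙 T.obj₃) := by
  rw [← ρ.rankNullity T hT]
  exact add_le_add (ρ.rank_le_rank_id_source _) (ρ.rank_le_rank_id_target _)

lemma rank_id_biprod (A B : C) : ρ.rank (𝟙 (A ⊞ B)) = ρ.rank (𝟙 A) + ρ.rank (𝟙 B) := by
  rw [← ρ.additive, show biprod.map (𝟙 A) (𝟙 B) = 𝟙 (A ⊞ B) by ext <;> simp]

end RankFunction

theorem kernel_on_objects_isThick (ρ : RankFunction C) :
    IsThickSet C {X : C | ρ.rank (𝟙 X) = 0} := by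
  constructor
  · intro Z hZ
    exact ρ.rank_eq_zero_of_isZero_target hZ _
  · intro A B e hA
    exact (ρ.rank_id_eq_of_iso e).symm.trans hA
  · intro A n hA
    exact (ρ.rank_id_shift n A).trans hA
  · rintro T hT (h₁ : ρ.rank (𝟙 T.obj₁) = 0) (h₃ : ρ.rank (𝟙 T.obj₃) = 0)
    show ρ.rank (𝟙 T.obj₂) = 0
    linarith [ρ.rank_id_obj₂_le hT, ρ.nonneg (𝟙 T.obj₂)]
  · rintro A B (hAB : ρ.rank (𝟙 (A ⊞ B)) = 0)
    show ρ.rank (𝟙 A) = 0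
    linarith [ρ.rank_id_biprod A B, ρ.nonneg (𝟙 A), ρ.nonneg (𝟙 B)]
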